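/- If γ : S^n → ℝ₊ is a convex integrand and δ : S^n → ℝ₊ is its dual convex integrand, then the dual convex integrand of δ is γ; equivalently, the double dual Wulff shape satisfies DDW_γ = W_γ. -/

import Mathlib

open scoped RealInnerProductSpace

noncomputable def sphereInv {n : ℕ} (x : EuclideanSpace ℝ (Fin (n+1))) :
    EuclideanSpace ℝ (Fin (n+1)) := -((‖x‖^2)⁻¹ • x)

noncomputable def graphSet {n : ℕ} (γ : EuclideanSpace ℝ (Fin (n+1)) → ℝ) :
    Set (EuclideanSpace ℝ (Fin (n+1))) :=
  (fun θ => γ θ • θ) '' Metric.sphere 0 1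

def ConvexIntegrand {n : ℕ} (γ : EuclideanSpace ℝ (Fin (n+1)) → ℝ) : Prop :=
  ContinuousOn γ (Metric.sphere 0 1) ∧
  (∀ θ ∈ Metric.sphere (0 : EuclideanSpace ℝ (Fin (n+1))) 1, 0 < γ θ) ∧
  sphereInv '' graphSet γ = frontier (convexHull ℝ (sphereInv '' graphSet γ))

noncomputable def Wulff {n : ℕ} (γ : EuclideanSpace ℝ (Fin (n+1)) → ℝ) :
    Set (EuclideanSpace ℝ (Fin (n+1))) :=
  ⋂ θ ∈ Metric.sphere (0 : EuclideanSpace ℝ (Fin (n+1))) 1,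
    {x | ⟪x, θ⟫ ≤ γ θ}

def IsDualIntegrand {n : ℕ} (γ δ : EuclideanSpace ℝ (Fin (n+1)) → ℝ) : Prop :=
  ConvexIntegrand δ ∧ sphereInv '' graphSet δ = frontier (Wulff γ)

/-!
Write `K° = {x | ∀ y ∈ K, -1 ≤ ⟪x, y⟫}`. For a positive integrand `γ`, `W_γ` is the polar of
`S = inv(graph γ)`, hence of `K = conv S`. If `δ` is dual to `γ`, then `W_δ` is the polar of
`∂W_γ`, and this is the polar of `W_γ` itself because `W_γ` is bounded, so the ray from `0` through
any `y ∈ W_γ` leaves it through `∂W_γ` at some `t • y` with `t ≥ 1`. Hence `W_δ = K°°`, which is `K` by the bipolar theorem: `K` is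
convex, closed since `∂K = S ⊆ K`, and contains `0` because `S` meets both halves of every line
through the origin. Then `∂W_δ = ∂K = S`, i.e. `γ` is dual to `δ`.
-/

section Topology

variable {X : Type*} [TopologicalSpace X]

theorem IsPreconnected.inter_frontier_nonempty {s t : Set X} (hs : IsPreconnected s)
    (hst : (s ∩ t).Nonempty) (hst' : (s \ t).Nonempty) : (s ∩ frontier t).Nonempty := by
  by_contra h
  have hcover : s ⊆ interior t ∪ interior tᶜ := fun x hx ↦ by
    rw [← compl_frontier_eq_union_interior]
    exact fun hxf ↦ h ⟨x, hx, hxf⟩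
  obtain ⟨x, -, hxt, hxt'⟩ := hs _ _ isOpen_interior isOpen_interior hcover
    (by
      obtain ⟨x, hxs, hxt⟩ := hst
      exact ⟨x, hxs, (hcover hxs).resolve_right fun hx ↦ interior_subset hx hxt⟩)
    (by
      obtain ⟨x, hxs, hxt⟩ := hst'
      exact ⟨x, hxs, (hcover hxs).resolve_left fun hx ↦ hxt (interior_subset hx)⟩)
  exact interior_subset hxt' (interior_subset hxt)

end Topology

section Normed

variable {E : Type*} [NormedAddCommGroup E] [NormedSpace ℝ E]

theorem exists_one_le_smul_mem_frontier {K : Set E} (hK : Bornology.IsBounded K) {y : E}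
    (hy : y ∈ K) (hy0 : y ≠ 0) : ∃ t : ℝ, 1 ≤ t ∧ t • y ∈ frontier K := by
  obtain ⟨C, hC⟩ := isBounded_iff_forall_norm_le.1 hK
  have hy_pos : 0 < ‖y‖ := norm_pos_iff.2 hy0
  have hray : IsPreconnected ((· • y) '' Set.Ici (1 : ℝ)) :=
    isPreconnected_Ici.image _ (continuous_id.smul continuous_const).continuousOn
  have hout : ((· • y) '' Set.Ici (1 : ℝ) \ K).Nonempty := by
    set t := max 1 ((C + 1) / ‖y‖)
    refine ⟨t • y, ⟨t, Set.mem_Ici.2 (le_max_left _ _), rfl⟩, fun ht ↦ ?_⟩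
    have hfar : C + 1 ≤ ‖t • y‖ := calc
      C + 1 = (C + 1) / ‖y‖ * ‖y‖ := (div_mul_cancel₀ _ hy_pos.ne').symm
      _ ≤ t * ‖y‖ := by gcongr; exact le_max_right _ _
      _ = ‖t • y‖ := by rw [norm_smul, Real.norm_of_nonneg (by positivity)]
    linarith [hC _ ht]
  obtain ⟨-, ⟨t, ht, rfl⟩, hfr⟩ :=
    hray.inter_frontier_nonempty ⟨y, ⟨1, Set.self_mem_Ici, one_smul ℝ y⟩, hy⟩ hout
  exact ⟨t, ht, hfr⟩

end Normed

section Polar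

variable {E : Type*} [NormedAddCommGroup E] [InnerProductSpace ℝ E]

/-- One-sided polar, with the sign matching `sphereInv`; Mathlib's `LinearMap.polar` bounds
`‖⟪x, y⟫‖` instead and only fits balanced sets. -/
def innerPolar (s : Set E) : Set E := {x | ∀ y ∈ s, -1 ≤ ⟪x, y⟫}

theorem innerPolar_antitone {s t : Set E} (h : s ⊆ t) : innerPolar t ⊆ innerPolar s :=
  fun _ hx y hy ↦ hx y (h hy)

theorem subset_innerPolar_innerPolar (s : Set E) : s ⊆ innerPolar (innerPolar s) :=
  fun x hx _ hy ↦ real_inner_comm x _ ▸ hy x hx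

theorem innerPolar_convexHull (s : Set E) : innerPolar (convexHull ℝ s) = innerPolar s := by
  refine (innerPolar_antitone (subset_convexHull ℝ s)).antisymm fun x hx ↦ ?_
  have hhalf : Convex ℝ {y : E | -1 ≤ ⟪x, y⟫} :=
    convex_halfSpace_ge (innerₛₗ ℝ x).isLinear (-1)
  exact fun y hy ↦ convexHull_min hx hhalf hy

theorem innerPolar_frontier {K : Set E} (hc : IsClosed K) (hb : Bornology.IsBounded K) :
    innerPolar (frontier K) = innerPolar K := by
  refine subset_antisymm (fun x hx y hy ↦ ?_) (innerPolar_antitone hc.frontier_subset)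
  rcases eq_or_ne y 0 with rfl | hy0
  · simp
  obtain ⟨t, ht, hty⟩ := exists_one_le_smul_mem_frontier hb hy hy0
  have h := hx _ hty
  rw [real_inner_smul_right] at h
  nlinarith

theorem innerPolar_innerPolar [CompleteSpace E] {K : Set E} (hc : IsClosed K)
    (hconv : Convex ℝ K) (h0 : 0 ∈ K) : innerPolar (innerPolar K) = K := by
  refine subset_antisymm (fun x hx ↦ ?_) (subset_innerPolar_innerPolar K)
  by_contra hxK
  obtain ⟨f, u, hfK, hfx⟩ := geometric_hahn_banach_closed_point hconv hc hxK
  have hu : 0 < u := by simpa using hfK 0 h0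
  set w := (-u⁻¹) • (InnerProductSpace.toDual ℝ E).symm f
  have hw : ∀ y, ⟪w, y⟫ = -(f y / u) := fun y ↦ by
    rw [real_inner_smul_left, InnerProductSpace.toDual_symm_apply]; ring
  have hwK : w ∈ innerPolar K := fun y hy ↦ by
    rw [hw, neg_le_neg_iff, div_le_one hu]
    exact (hfK y hy).le
  have := hx w hwK
  rw [real_inner_comm, hw, neg_le_neg_iff, div_le_one hu] at this
  linarith

end Polar

theorem zero_mem_convexHull_of_smul_mem {V : Type*} [AddCommGroup V] [Module ℝ V] {s : Set V}
    {v : V} {a b : ℝ} (ha : a < 0) (hb : 0 < b) (hav : a • v ∈ s) (hbv : b • v ∈ s) :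
    (0 : V) ∈ convexHull ℝ s := by
  have hba : 0 < b - a := by linarith
  refine segment_subset_convexHull hav hbv ⟨b / (b - a), -a / (b - a), by positivity,
    div_nonneg (by linarith) hba.le, by field_simp; ring, ?_⟩
  rw [smul_smul, smul_smul, ← add_smul]
  convert zero_smul ℝ v using 2
  field_simp
  ring

section Wulff

variable {n : ℕ}

theorem sphereInv_smul_of_norm_eq_one {θ : EuclideanSpace ℝ (Fin (n+1))} (hθ : ‖θ‖ = 1)
    (c : ℝ) : sphereInv (c • θ) = -c⁻¹ • θ := by
  rw [sphereInv, norm_smul, hθ, mul_one, Real.norm_eq_abs, sq_abs, smul_smul, ← neg_smul]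
  rcases eq_or_ne c 0 with rfl | hc
  · simp
  · field_simp

theorem sphereInv_image_graphSet (γ : EuclideanSpace ℝ (Fin (n+1)) → ℝ) :
    sphereInv '' graphSet γ = (fun θ ↦ -(γ θ)⁻¹ • θ) '' Metric.sphere 0 1 := by
  rw [graphSet, Set.image_image]
  exact Set.image_congr fun θ hθ ↦
    sphereInv_smul_of_norm_eq_one (mem_sphere_zero_iff_norm.1 hθ) (γ θ)

theorem Wulff_eq_innerPolar {γ : EuclideanSpace ℝ (Fin (n+1)) → ℝ}
    (hpos : ∀ θ ∈ Metric.sphere (0 : EuclideanSpace ℝ (Fin (n+1))) 1, 0 < γ θ) :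
    Wulff γ = innerPolar (sphereInv '' graphSet γ) := by
  ext x
  simp only [Wulff, innerPolar, sphereInv_image_graphSet, Set.mem_iInter, Set.mem_ofPred_eq,
    Set.forall_mem_image]
  refine forall₂_congr fun θ hθ ↦ ?_
  rw [real_inner_smul_right, neg_mul, neg_le_neg_iff, inv_mul_le_one₀ (hpos θ hθ)]

theorem isClosed_Wulff (γ : EuclideanSpace ℝ (Fin (n+1)) → ℝ) : IsClosed (Wulff γ) :=
  isClosed_biInter fun _ _ ↦ isClosed_le (by fun_prop) continuous_const

theorem isBounded_Wulff {γ : EuclideanSpace ℝ (Fin (n+1)) → ℝ}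
    (hcont : ContinuousOn γ (Metric.sphere 0 1)) : Bornology.IsBounded (Wulff γ) := by
  obtain ⟨M, hM⟩ := (isCompact_sphere _ _).bddAbove_image hcont
  refine isBounded_iff_forall_norm_le.2 ⟨max M 0, fun x hx ↦ ?_⟩
  rcases eq_or_ne x 0 with rfl | hx0
  · simp
  have hθ : ‖x‖⁻¹ • x ∈ Metric.sphere (0 : EuclideanSpace ℝ (Fin (n+1))) 1 := by
    simp [norm_smul, hx0]
  have hle : ⟪x, ‖x‖⁻¹ • x⟫ ≤ γ (‖x‖⁻¹ • x) := Set.mem_iInter₂.1 hx _ hθ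
  rw [real_inner_smul_right, real_inner_self_eq_norm_sq, sq,
    inv_mul_cancel_left₀ (norm_ne_zero_iff.2 hx0)] at hle
  exact hle.trans ((hM ⟨_, hθ, rfl⟩).trans (le_max_left _ _))

theorem zero_mem_convexHull_sphereInv_image_graphSet {γ : EuclideanSpace ℝ (Fin (n+1)) → ℝ}
    (hpos : ∀ θ ∈ Metric.sphere (0 : EuclideanSpace ℝ (Fin (n+1))) 1, 0 < γ θ) :
    (0 : EuclideanSpace ℝ (Fin (n+1))) ∈ convexHull ℝ (sphereInv '' graphSet γ) := by
  obtain ⟨θ, hθ⟩ : (Metric.sphere (0 : EuclideanSpace ℝ (Fin (n+1))) 1).Nonempty :=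
    NormedSpace.sphere_nonempty.2 zero_le_one
  have hθ' : -θ ∈ Metric.sphere (0 : EuclideanSpace ℝ (Fin (n+1))) 1 := by simpa using hθ
  rw [sphereInv_image_graphSet]
  refine zero_mem_convexHull_of_smul_mem (v := θ) (neg_lt_zero.2 (inv_pos.2 (hpos θ hθ)))
    (inv_pos.2 (hpos _ hθ')) ⟨θ, hθ, rfl⟩ ⟨-θ, hθ', by simp⟩

theorem ConvexIntegrand.isClosed_convexHull {γ : EuclideanSpace ℝ (Fin (n+1)) → ℝ}
    (hγ : ConvexIntegrand γ) : IsClosed (convexHull ℝ (sphereInv '' graphSet γ)) :=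
  frontier_subset_iff_isClosed.1 (hγ.2.2 ▸ subset_convexHull ℝ _)

theorem IsDualIntegrand.Wulff_eq_convexHull {γ δ : EuclideanSpace ℝ (Fin (n+1)) → ℝ}
    (hγ : ConvexIntegrand γ) (hδ : IsDualIntegrand γ δ) :
    Wulff δ = convexHull ℝ (sphereInv '' graphSet γ) := by
  calc Wulff δ = innerPolar (frontier (Wulff γ)) := by rw [Wulff_eq_innerPolar hδ.1.2.1, hδ.2]
    _ = innerPolar (innerPolar (convexHull ℝ (sphereInv '' graphSet γ))) := by
      rw [innerPolar_frontier (isClosed_Wulff γ) (isBounded_Wulff hγ.1),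
        Wulff_eq_innerPolar hγ.2.1, innerPolar_convexHull]
    _ = convexHull ℝ (sphereInv '' graphSet γ) :=
      innerPolar_innerPolar hγ.isClosed_convexHull (convex_convexHull ℝ _)
        (zero_mem_convexHull_sphereInv_image_graphSet hγ.2.1)

end Wulff

/-- Duality of convex integrands is involutive: the dual of the dual of `γ` is `γ`,
and correspondingly `DDW_γ = W_γ`. -/
theorem stmt_10 {n : ℕ} (γ δ : EuclideanSpace ℝ (Fin (n+1)) → ℝ)
    (hγ : ConvexIntegrand γ) (hδ : IsDualIntegrand γ δ) :
    IsDualIntegrand δ γ ∧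
      ∀ ξ : EuclideanSpace ℝ (Fin (n+1)) → ℝ, IsDualIntegrand δ ξ → Wulff ξ = Wulff γ := by
  have hfrontier : frontier (Wulff δ) = sphereInv '' graphSet γ := by
    rw [hδ.Wulff_eq_convexHull hγ, ← hγ.2.2]
  refine ⟨⟨hγ, hfrontier.symm⟩, fun ξ hξ ↦ ?_⟩
  rw [Wulff_eq_innerPolar hξ.1.2.1, Wulff_eq_innerPolar hγ.2.1, hξ.2, hfrontier]
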